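/- arXiv:1910.08885 — 4 statements merged into one kernel-verified Lean document; each statement's English description precedes it below -/
import Mathlib

section
/- Let Ω ⊂ P(ℝ^d) be a properly convex domain and let V_n be a sequence of p-dimensional linear subspaces converging to V in the Grassmannian Gr_p(ℝ^d), with [V] ∩ Ω ≠ ∅. Then cl([V_n] ∩ Ω) converges to cl([V] ∩ Ω) in the Hausdorff topology induced by a Riemannian distance on P(ℝ^d). -/
open Set Filter Topology

/-- The Hilbert (cross-ratio) distance between two points of a convex set `Ω`
open in its span (given inside an affine chart): if the line `t ↦ x + t • (y - x)`
meets `Ω` exactly for `t ∈ (m, M)` (with `x` at `t = 0`, `y` at `t = 1`), this is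
`(1/2) log [a,x,y,b] = (1/2) log ((M (1 - m)) / ((M - 1)(-m)))`. -/
noncomputable def hilbertDist {E : Type*} [AddCommGroup E] [Module ℝ E]
    (Ω : Set E) (x y : E) : ℝ :=
  @ite _ (x = y) (Classical.dec _) 0 <|
    (1 / 2) * Real.log
      ((sSup {t : ℝ | x + t • (y - x) ∈ Ω} * (1 - sInf {t : ℝ | x + t • (y - x) ∈ Ω})) /
        ((sSup {t : ℝ | x + t • (y - x) ∈ Ω} - 1) * (-(sInf {t : ℝ | x + t • (y - x) ∈ Ω}))))

/-- The open face `F_C(x)` of a point `x` of `cl C`: `x` together with all `y ∈ cl C`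
such that some open segment contained in `cl C` contains both `x` and `y`. -/
def face {E : Type*} [AddCommGroup E] [Module ℝ E] [TopologicalSpace E]
    (C : Set E) (x : E) : Set E :=
  insert x {y | y ∈ closure C ∧ ∃ a b : E, openSegment ℝ a b ⊆ closure C ∧
    x ∈ openSegment ℝ a b ∧ y ∈ openSegment ℝ a b}

/-- A properly convex domain, realized in an affine chart: open, convex, bounded, nonempty. -/
def IsProperlyConvex {E : Type*} [NormedAddCommGroup E] [NormedSpace ℝ E] (Ω : Set E) : Prop :=
  IsOpen Ω ∧ Convex ℝ Ω ∧ Bornology.IsBounded Ω ∧ Ω.Nonempty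

/-- The Hausdorff distance between two sets with respect to a distance function `d`. -/
noncomputable def hausdorffDistWith {E : Type*} (d : E → E → ℝ) (A B : Set E) : ℝ :=
  max (sSup ((fun a => sInf ((fun b => d a b) '' B)) '' A)) (sSup ((fun b => sInf ((fun a => d a b) '' A)) '' B))

/-- The open simplex with vertex set `v`: the relative interior of the convex hull
of the `v i`, i.e. all strictly positive convex combinations. -/
def simplexOf {E : Type*} [AddCommGroup E] [Module ℝ E] {p : ℕ} (v : Fin p → E) : Set E :=
  {x | ∃ t : Fin p → ℝ, (∀ i, 0 < t i) ∧ ∑ i, t i = 1 ∧ x = ∑ i, t i • v i}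

/-- A properly embedded simplex in `Ω` (in the affine chart): the open simplex on an
affinely independent vertex set, contained in `Ω`, whose closure meets `Ω` only in itself
(equivalently, the inclusion `S ↪ Ω` is proper). -/
def IsPES {E : Type*} [NormedAddCommGroup E] [NormedSpace ℝ E] (Ω S : Set E) : Prop :=
  ∃ p : ℕ, ∃ v : Fin p → E, AffineIndependent ℝ v ∧ S = simplexOf v ∧
    S ⊆ Ω ∧ closure S ∩ Ω = S

/-- A maximal properly embedded simplex. -/
def IsMaxPES {E : Type*} [NormedAddCommGroup E] [NormedSpace ℝ E] (Ω S : Set E) : Prop :=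
  IsPES Ω S ∧ ∀ S' : Set E, IsPES Ω S' → S ⊆ S' → S = S'



section Helpers
variable {E : Type*} [NormedAddCommGroup E] [NormedSpace ℝ E]

lemma mem_aspan_iff' {p : ℕ} (v : Fin p → E) (i₀ : Fin p) (x : E) :
    x ∈ affineSpan ℝ (Set.range v) ↔
      ∃ c : {j : Fin p // j ≠ i₀} → ℝ, x = v i₀ + ∑ j, c j • (v j - v i₀) := by
  have h0 : v i₀ ∈ affineSpan ℝ (Set.range v) := subset_affineSpan ℝ _ ⟨i₀, rfl⟩
  rw [← AffineSubspace.vsub_right_mem_direction_iff_mem h0 x, direction_affineSpan,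
    vectorSpan_range_eq_span_range_vsub_right_ne ℝ v i₀, Submodule.mem_span_range_iff_exists_fun]
  simp only [vsub_eq_sub]
  constructor
  · rintro ⟨c, hc⟩; exact ⟨c, by rw [hc]; abel⟩
  · rintro ⟨c, hc⟩; exact ⟨c, by rw [hc]; abel⟩

lemma antilip_of_li' {ι : Type*} [Fintype ι] (u : ι → E) (h : LinearIndependent ℝ u) :
    ∃ m : ℝ, 0 < m ∧ ∀ c : ι → ℝ, ‖c‖ ≤ m * ‖∑ j, c j • u j‖ := by
  classical
  set L : (ι → ℝ) →ₗ[ℝ] E := Fintype.linearCombination ℝ u with hL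
  have hLapp : ∀ c, L c = ∑ j, c j • u j := fun c => by
    simp [hL, Fintype.linearCombination_apply]
  have hinj : Function.Injective L := by
    rw [← LinearMap.ker_eq_bot, LinearMap.ker_eq_bot']
    intro c hc
    funext i
    exact (Fintype.linearIndependent_iff.1 h) c (by rw [← hLapp]; exact hc) i
  let e : (ι → ℝ) ≃ₗ[ℝ] LinearMap.range L := LinearEquiv.ofInjective L hinj
  let e' := e.toContinuousLinearEquiv
  have hanti := e'.antilipschitz
  refine ⟨max (‖(e'.symm : LinearMap.range L →L[ℝ] (ι → ℝ))‖₊) 1, by positivity, fun c => ?_⟩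
  have h1 := hanti.le_mul_dist c 0
  simp only [dist_zero_right, map_zero] at h1
  have h2 : ‖e' c‖ = ‖L c‖ := by
    have : ((e' c : LinearMap.range L) : E) = L c := rfl
    rw [← this]; rfl
  rw [h2, hLapp] at h1
  calc ‖c‖ ≤ (‖(e'.symm : LinearMap.range L →L[ℝ] (ι → ℝ))‖₊ : ℝ) * ‖∑ j, c j • u j‖ := h1
    _ ≤ _ := mul_le_mul_of_nonneg_right (le_max_left _ _) (norm_nonneg _)

lemma ball_seg' {Ω : Set E} (hconv : Convex ℝ Ω) {x₀ : E} {r : ℝ}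
    (hball : Metric.ball x₀ r ⊆ Ω) {x : E} (hx : x ∈ Ω) {t : ℝ} (ht0 : 0 < t) (ht1 : t ≤ 1) :
    Metric.ball (x + t • (x₀ - x)) (t * r) ⊆ Ω := by
  intro z hz
  rw [Metric.mem_ball, dist_eq_norm] at hz
  set b : E := x₀ + t⁻¹ • (z - (x + t • (x₀ - x))) with hb
  have hbmem : b ∈ Metric.ball x₀ r := by
    rw [Metric.mem_ball, dist_eq_norm]
    have hb2 : b - x₀ = t⁻¹ • (z - (x + t • (x₀ - x))) := by rw [hb]; abel
    rw [hb2, norm_smul, norm_inv, Real.norm_of_nonneg ht0.le]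
    rw [inv_mul_lt_iff₀ ht0]
    linarith [hz]
  have hmem := hconv hx (hball hbmem) (by linarith : (0:ℝ) ≤ 1 - t) ht0.le (by ring)
  have heq : (1 - t) • x + t • b = z := by
    rw [hb, smul_add, smul_smul, mul_inv_cancel₀ ht0.ne']
    module
  rwa [heq] at hmem

lemma sum_smul_norm_le' {ι : Type*} [Fintype ι] (c : ι → ℝ) (w : ι → E) (δ : ℝ)
    (hw : ∀ j, ‖w j‖ ≤ δ) : ‖∑ j, c j • w j‖ ≤ (Fintype.card ι) * δ * ‖c‖ := by
  calc ‖∑ j, c j • w j‖ ≤ ∑ j, ‖c j • w j‖ := norm_sum_le _ _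
    _ ≤ ∑ _j : ι, ‖c‖ * δ := Finset.sum_le_sum fun j _ => by
        rw [norm_smul]
        exact mul_le_mul (norm_le_pi_norm c j) (hw j) (norm_nonneg _) (norm_nonneg _)
    _ = (Fintype.card ι) * (‖c‖ * δ) := by rw [Finset.sum_const, Finset.card_univ, nsmul_eq_mul]
    _ = (Fintype.card ι) * δ * ‖c‖ := by ring

end Helpers

set_option maxHeartbeats 1600000 in
theorem stmt_11' {n p : ℕ} (Ω : Set (EuclideanSpace ℝ (Fin n)))
    (hopen : IsOpen Ω) (hcvx : Convex ℝ Ω) (hbdd : Bornology.IsBounded Ω)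
    (v : ℕ → Fin p → EuclideanSpace ℝ (Fin n)) (vl : Fin p → EuclideanSpace ℝ (Fin n))
    (hvl : AffineIndependent ℝ vl)
    (hconv : ∀ j, Tendsto (fun k => v k j) atTop (𝓝 (vl j)))
    (hmeet : ((affineSpan ℝ (Set.range vl) : Set (EuclideanSpace ℝ (Fin n))) ∩ Ω).Nonempty) :
    Tendsto (fun k => Metric.hausdorffDist
        (closure ((affineSpan ℝ (Set.range (v k)) : Set (EuclideanSpace ℝ (Fin n))) ∩ Ω))
        (closure ((affineSpan ℝ (Set.range vl) : Set (EuclideanSpace ℝ (Fin n))) ∩ Ω)))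
      atTop (𝓝 0) := by
  classical
  obtain ⟨x₀, hx₀V, hx₀Ω⟩ := hmeet
  have hx₀V' : x₀ ∈ affineSpan ℝ (Set.range vl) := hx₀V
  rcases Nat.eq_zero_or_pos p with hp | hp
  · exfalso
    subst hp
    rw [Set.range_eq_empty vl, AffineSubspace.span_empty] at hx₀V'
    exact hx₀V'
  set i₀ : Fin p := ⟨0, hp⟩ with hi₀
  set u : {j : Fin p // j ≠ i₀} → EuclideanSpace ℝ (Fin n) := fun j => vl j - vl i₀ with hu_def
  have hu : LinearIndependent ℝ u := by
    have := (affineIndependent_iff_linearIndependent_vsub ℝ vl i₀).1 hvl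
    simpa [hu_def, vsub_eq_sub] using this
  obtain ⟨m, hm, hmle₀⟩ := antilip_of_li' u hu
  have hmle : ∀ c : {j : Fin p // j ≠ i₀} → ℝ,
      ‖c‖ ≤ m * ‖∑ j, c j • (vl ↑j - vl i₀)‖ := by
    intro c
    have h := hmle₀ c
    simpa only [hu_def] using h
  obtain ⟨r, hr, hball⟩ := Metric.isOpen_iff.1 hopen x₀ hx₀Ω
  obtain ⟨R, hR⟩ := hbdd.subset_closedBall x₀
  have hR0 : 0 ≤ R := by
    have := hR hx₀Ω; rwa [Metric.mem_closedBall, dist_self] at this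
  have hΩbd : ∀ x ∈ Ω, ‖x - x₀‖ ≤ R := fun x hx => by
    have := hR hx; rwa [Metric.mem_closedBall, dist_eq_norm] at this
  set K₀ : ℝ := ‖vl i₀ - x₀‖ with hK₀
  have hK₀0 : 0 ≤ K₀ := norm_nonneg _
  set M' : ℝ := m * (R + K₀) with hM'
  have hM'0 : 0 ≤ M' := by positivity
  set M : ℝ := 2 * m * (R + K₀ + 1) with hM
  have hM0 : 0 ≤ M := by positivity
  set C : ℝ := 1 + 2 * p * (M + M' + 1) with hC
  have hC1 : 1 ≤ C := by
    have h0 : 0 ≤ 2 * (p:ℝ) * (M + M' + 1) := by positivity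
    linarith
  have hC0 : 0 < C := by linarith
  have hcard : (Fintype.card {j : Fin p // j ≠ i₀} : ℝ) ≤ p := by
    have h0 : Fintype.card {j : Fin p // j ≠ i₀} ≤ p :=
      le_trans (Fintype.card_subtype_le _) (by simp)
    exact_mod_cast h0
  -- coefficient bound for the limit slice
  have hcoefB : ∀ x ∈ Ω, ∀ c : {j : Fin p // j ≠ i₀} → ℝ,
      x = vl i₀ + ∑ j, c j • (vl ↑j - vl i₀) → ‖c‖ ≤ M' := by
    intro x hx c hc
    have h1 : ∑ j, c j • (vl ↑j - vl i₀) = x - vl i₀ := by rw [hc]; abel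
    have h2 : ‖x - vl i₀‖ ≤ R + K₀ := by
      have heq : x - vl i₀ = (x - x₀) - (vl i₀ - x₀) := by abel
      rw [heq]
      exact (norm_sub_le _ _).trans (by linarith [hΩbd x hx])
    calc ‖c‖ ≤ m * ‖∑ j, c j • (vl ↑j - vl i₀)‖ := hmle c
      _ = m * ‖x - vl i₀‖ := by rw [h1]
      _ ≤ M' := by rw [hM']; nlinarith
  have hppos : (0:ℝ) ≤ p := Nat.cast_nonneg p
  clear_value K₀ M' M C
  -- main estimate
  rw [Metric.tendsto_atTop]
  intro ε hε
  set ε' : ℝ := ε / 8 with hε'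
  have hε'0 : 0 < ε' := by positivity
  have hε'ε : 8 * ε' = ε := by rw [hε']; ring
  clear_value ε'
  obtain ⟨t, ht0, ht1, htR, htr⟩ :
      ∃ t : ℝ, 0 < t ∧ t ≤ 1 ∧ t * R ≤ ε' ∧ t * r ≤ ε' := by
    refine ⟨min 1 (ε' / (R + r + 1)), lt_min one_pos (by positivity), min_le_left _ _, ?_, ?_⟩
    · have h1 : min 1 (ε' / (R + r + 1)) ≤ ε' / (R + r + 1) := min_le_right _ _
      have h2 : min 1 (ε' / (R + r + 1)) * R ≤ (ε' / (R + r + 1)) * R :=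
        mul_le_mul_of_nonneg_right h1 hR0
      have h3 : (ε' / (R + r + 1)) * R ≤ ε' := by
        rw [div_mul_eq_mul_div, div_le_iff₀ (by positivity)]
        nlinarith
      linarith
    · have h1 : min 1 (ε' / (R + r + 1)) ≤ ε' / (R + r + 1) := min_le_right _ _
      have h2 : min 1 (ε' / (R + r + 1)) * r ≤ (ε' / (R + r + 1)) * r :=
        mul_le_mul_of_nonneg_right h1 hr.le
      have h3 : (ε' / (R + r + 1)) * r ≤ ε' := by
        rw [div_mul_eq_mul_div, div_le_iff₀ (by positivity)]
        nlinarith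
      linarith
  have htrpos : 0 < t * r := mul_pos ht0 hr
  obtain ⟨δ, hδ0, hδ1, hδm, hδtr, hδε⟩ :
      ∃ δ : ℝ, 0 < δ ∧ δ ≤ 1 ∧ 4 * m * p * δ ≤ 1 ∧ 2 * (δ * C) ≤ t * r ∧ δ * C ≤ ε' := by
    have hp' : (0:ℝ) < p := by exact_mod_cast hp
    refine ⟨min (min 1 (1 / (4 * m * p))) (min (t * r / (2 * C)) (ε' / C)),
      lt_min (lt_min one_pos (by positivity)) (lt_min (by positivity) (by positivity)),
      le_trans (min_le_left _ _) (min_le_left _ _), ?_, ?_, ?_⟩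
    · have h1 : min (min 1 (1 / (4 * m * p))) (min (t * r / (2 * C)) (ε' / C))
          ≤ 1 / (4 * m * p) := le_trans (min_le_left _ _) (min_le_right _ _)
      rw [le_div_iff₀ (by positivity)] at h1
      linarith
    · have h1 : min (min 1 (1 / (4 * m * p))) (min (t * r / (2 * C)) (ε' / C))
          ≤ t * r / (2 * C) := le_trans (min_le_right _ _) (min_le_left _ _)
      rw [le_div_iff₀ (by positivity)] at h1
      calc 2 * (min (min 1 (1 / (4 * m * p))) (min (t * r / (2 * C)) (ε' / C)) * C)
          = min (min 1 (1 / (4 * m * p))) (min (t * r / (2 * C)) (ε' / C)) * (2 * C) := by ring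
        _ ≤ t * r := h1
    · have h1 : min (min 1 (1 / (4 * m * p))) (min (t * r / (2 * C)) (ε' / C))
          ≤ ε' / C := le_trans (min_le_right _ _) (min_le_right _ _)
      rw [le_div_iff₀ hC0] at h1
      exact h1
  have hδC : δ * C ≤ t * r / 2 := by linarith
  have hδC' : δ * C < t * r := by linarith
  -- eventual closeness of frames
  have hev : ∀ᶠ k in atTop, ∀ j, ‖v k j - vl j‖ ≤ δ := by
    rw [eventually_all]
    intro j
    obtain ⟨N, hN⟩ := Metric.tendsto_atTop.1 (hconv j) δ hδ0
    exact eventually_atTop.2 ⟨N, fun k hk => by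
      have := hN k hk; rw [dist_eq_norm] at this; exact this.le⟩
  obtain ⟨N, hN⟩ := eventually_atTop.1 hev
  refine ⟨N, fun k hk => ?_⟩
  have hδk : ∀ j, ‖v k j - vl j‖ ≤ δ := hN k hk
  -- sum splitting
  have hsplit : ∀ c : {j : Fin p // j ≠ i₀} → ℝ,
      ∑ j, c j • ((v k j - v k i₀) - (vl ↑j - vl i₀))
        = (∑ j, c j • (v k j - v k i₀)) - ∑ j, c j • (vl ↑j - vl i₀) := by
    intro c
    rw [← Finset.sum_sub_distrib]
    exact Finset.sum_congr rfl fun j _ => smul_sub _ _ _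
  -- perturbation estimate
  have hpert : ∀ c : {j : Fin p // j ≠ i₀} → ℝ,
      ‖∑ j, c j • ((v k j - v k i₀) - (vl ↑j - vl i₀))‖ ≤ 2 * p * δ * ‖c‖ := by
    intro c
    have h1 : ∀ j : {j : Fin p // j ≠ i₀},
        ‖(v k j - v k i₀) - (vl ↑j - vl i₀)‖ ≤ 2 * δ := by
      intro j
      have heq : (v k j - v k i₀) - (vl ↑j - vl i₀)
          = (v k j - vl j) - (v k i₀ - vl i₀) := by abel
      rw [heq]
      exact (norm_sub_le _ _).trans (by linarith [hδk j, hδk i₀])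
    have h2 := sum_smul_norm_le' c
      (fun j : {j : Fin p // j ≠ i₀} => (v k j - v k i₀) - (vl ↑j - vl i₀)) (2 * δ) h1
    refine h2.trans ?_
    have h3 : (Fintype.card {j : Fin p // j ≠ i₀} : ℝ) * (2 * δ) ≤ 2 * p * δ := by
      nlinarith [hcard, hδ0.le]
    exact mul_le_mul_of_nonneg_right h3 (norm_nonneg c)
  -- coefficient bound for the moving slice
  have hcoefA : ∀ x ∈ Ω, ∀ c : {j : Fin p // j ≠ i₀} → ℝ,
      x = v k i₀ + ∑ j, c j • (v k j - v k i₀) → ‖c‖ ≤ M := by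
    intro x hx c hc
    have h1 : ∑ j, c j • (vl ↑j - vl i₀)
        = (x - v k i₀) - ∑ j, c j • ((v k j - v k i₀) - (vl ↑j - vl i₀)) := by
      rw [hsplit c, hc]; abel
    have h2 : ‖x - v k i₀‖ ≤ R + K₀ + δ := by
      have heq : x - v k i₀ = (x - x₀) - (vl i₀ - x₀) - (v k i₀ - vl i₀) := by abel
      rw [heq]
      refine (norm_sub_le _ _).trans ?_
      have h5 := (norm_sub_le (x - x₀) (vl i₀ - x₀))
      linarith [hΩbd x hx, hδk i₀]
    have h3 : ‖∑ j, c j • (vl ↑j - vl i₀)‖ ≤ (R + K₀ + δ) + 2 * p * δ * ‖c‖ := by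
      rw [h1]
      exact (norm_sub_le _ _).trans (by linarith [hpert c])
    have h4 : ‖c‖ ≤ m * ((R + K₀ + δ) + 2 * p * δ * ‖c‖) :=
      (hmle c).trans (mul_le_mul_of_nonneg_left h3 hm.le)
    have h5 : 2 * m * p * δ * ‖c‖ ≤ (1/2) * ‖c‖ := by
      have := norm_nonneg c
      nlinarith
    rw [hM]
    nlinarith [norm_nonneg c]
  -- direction 1 : any point of the moving slice is close to the limit slice
  have hdir1 : ∀ x ∈ (affineSpan ℝ (Set.range (v k)) : Set (EuclideanSpace ℝ (Fin n))) ∩ Ω,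
      ∃ y ∈ (affineSpan ℝ (Set.range vl) : Set (EuclideanSpace ℝ (Fin n))) ∩ Ω,
        dist x y ≤ 3 * ε' := by
    rintro x ⟨hxV, hxΩ⟩
    obtain ⟨c, hc⟩ := (mem_aspan_iff' (v k) i₀ x).1 hxV
    have hcM : ‖c‖ ≤ M := hcoefA x hxΩ c hc
    set x' : EuclideanSpace ℝ (Fin n) := vl i₀ + ∑ j, c j • (vl ↑j - vl i₀) with hx'
    have hx'V : x' ∈ affineSpan ℝ (Set.range vl) := (mem_aspan_iff' vl i₀ x').2 ⟨c, rfl⟩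
    have hxx' : ‖x' - x‖ ≤ δ * C := by
      have heq : x' - x
          = (vl i₀ - v k i₀) - ∑ j, c j • ((v k j - v k i₀) - (vl ↑j - vl i₀)) := by
        rw [hsplit c, hx', hc]; abel
      rw [heq]
      refine (norm_sub_le _ _).trans ?_
      have h1 : ‖vl i₀ - v k i₀‖ ≤ δ := by
        rw [norm_sub_rev]; exact hδk i₀
      have h2 : 2 * p * δ * ‖c‖ ≤ 2 * p * δ * M :=
        mul_le_mul_of_nonneg_left hcM (by positivity)
      have h3 := hpert c
      rw [hC]
      have h7 : 0 ≤ 2 * (p:ℝ) * δ * (M' + 1) := by positivity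
      have h8 : δ * (1 + 2 * (p:ℝ) * (M + M' + 1))
          = δ + 2 * (p:ℝ) * δ * M + 2 * (p:ℝ) * δ * (M' + 1) := by ring
      linarith
    set y : EuclideanSpace ℝ (Fin n) := x' + t • (x₀ - x') with hy
    have hyV : y ∈ affineSpan ℝ (Set.range vl) := by
      have h := (affineSpan ℝ (Set.range vl)).smul_vsub_vadd_mem t hx₀V' hx'V hx'V
      have heq2 : t • (x₀ -ᵥ x') +ᵥ x' = y := by
        rw [hy, vsub_eq_sub, vadd_eq_add]; abel
      rwa [heq2] at h
    have hyΩ : y ∈ Ω := by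
      apply ball_seg' hcvx hball hxΩ ht0 ht1
      rw [Metric.mem_ball, dist_eq_norm]
      have heq : y - (x + t • (x₀ - x)) = (1 - t) • (x' - x) := by
        rw [hy]; module
      rw [heq, norm_smul, Real.norm_of_nonneg (by linarith : (0:ℝ) ≤ 1 - t)]
      calc (1 - t) * ‖x' - x‖ ≤ 1 * ‖x' - x‖ :=
            mul_le_mul_of_nonneg_right (by linarith) (norm_nonneg _)
        _ = ‖x' - x‖ := one_mul _
        _ ≤ δ * C := hxx'
        _ < t * r := hδC'
    refine ⟨y, ⟨hyV, hyΩ⟩, ?_⟩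
    have h1 : dist x y ≤ ‖x - x'‖ + ‖x' - y‖ := by
      rw [dist_eq_norm]
      have heq : x - y = (x - x') + (x' - y) := by abel
      rw [heq]
      exact norm_add_le _ _
    have h2 : ‖x' - y‖ = t * ‖x₀ - x'‖ := by
      have heq : x' - y = -(t • (x₀ - x')) := by rw [hy]; abel
      rw [heq, norm_neg, norm_smul, Real.norm_of_nonneg ht0.le]
    have h3 : ‖x₀ - x'‖ ≤ R + δ * C := by
      have heq : x₀ - x' = -((x - x₀) + (x' - x)) := by abel
      rw [heq, norm_neg]
      refine (norm_add_le _ _).trans ?_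
      linarith [hΩbd x hxΩ, hxx']
    have h4 : ‖x - x'‖ ≤ δ * C := by rw [norm_sub_rev]; exact hxx'
    have h5 : t * ‖x₀ - x'‖ ≤ t * (R + δ * C) := mul_le_mul_of_nonneg_left h3 ht0.le
    have h6 : t * (R + δ * C) ≤ t * R + δ * C := by nlinarith [mul_pos hδ0 hC0]
    linarith
  -- direction 2 : any point of the limit slice is close to the moving slice
  have hdir2 : ∀ x ∈ (affineSpan ℝ (Set.range vl) : Set (EuclideanSpace ℝ (Fin n))) ∩ Ω,
      ∃ y ∈ (affineSpan ℝ (Set.range (v k)) : Set (EuclideanSpace ℝ (Fin n))) ∩ Ω,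
        dist x y ≤ 3 * ε' := by
    rintro x ⟨hxV, hxΩ⟩
    set y : EuclideanSpace ℝ (Fin n) := x + t • (x₀ - x) with hy
    have hyΩ : y ∈ Ω := ball_seg' hcvx hball hxΩ ht0 ht1 (Metric.mem_ball_self htrpos)
    have hyball : Metric.ball y (t * r) ⊆ Ω := ball_seg' hcvx hball hxΩ ht0 ht1
    have hyV : y ∈ affineSpan ℝ (Set.range vl) := by
      have h := (affineSpan ℝ (Set.range vl)).smul_vsub_vadd_mem t hx₀V' hxV hxV
      have heq2 : t • (x₀ -ᵥ x) +ᵥ x = y := by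
        rw [hy, vsub_eq_sub, vadd_eq_add]; abel
      rwa [heq2] at h
    obtain ⟨c, hc⟩ := (mem_aspan_iff' vl i₀ y).1 hyV
    have hcM : ‖c‖ ≤ M' := hcoefB y hyΩ c hc
    set yk : EuclideanSpace ℝ (Fin n) := v k i₀ + ∑ j, c j • (v k j - v k i₀) with hyk
    have hykV : yk ∈ affineSpan ℝ (Set.range (v k)) := (mem_aspan_iff' (v k) i₀ yk).2 ⟨c, rfl⟩
    have hdiff : ‖yk - y‖ ≤ δ * C := by
      have heq : yk - y
          = (v k i₀ - vl i₀) + ∑ j, c j • ((v k j - v k i₀) - (vl ↑j - vl i₀)) := by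
        rw [hsplit c, hyk, hc]; abel
      rw [heq]
      refine (norm_add_le _ _).trans ?_
      have h2 : 2 * p * δ * ‖c‖ ≤ 2 * p * δ * M' :=
        mul_le_mul_of_nonneg_left hcM (by positivity)
      have h3 := hpert c
      rw [hC]
      have h7 : 0 ≤ 2 * (p:ℝ) * δ * (M + 1) := by positivity
      have h8 : δ * (1 + 2 * (p:ℝ) * (M + M' + 1))
          = δ + 2 * (p:ℝ) * δ * M' + 2 * (p:ℝ) * δ * (M + 1) := by ring
      linarith [hδk i₀]
    have hykΩ : yk ∈ Ω := by
      apply hyball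
      rw [Metric.mem_ball, dist_eq_norm]
      calc ‖yk - y‖ ≤ δ * C := hdiff
        _ < t * r := hδC'
    refine ⟨yk, ⟨hykV, hykΩ⟩, ?_⟩
    have h1 : dist x yk ≤ ‖x - y‖ + ‖y - yk‖ := by
      rw [dist_eq_norm]
      have heq : x - yk = (x - y) + (y - yk) := by abel
      rw [heq]
      exact norm_add_le _ _
    have h2 : ‖x - y‖ ≤ t * R := by
      have heq : x - y = -(t • (x₀ - x)) := by rw [hy]; abel
      rw [heq, norm_neg, norm_smul, Real.norm_of_nonneg ht0.le]
      have : ‖x₀ - x‖ ≤ R := by rw [norm_sub_rev]; exact hΩbd x hxΩ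
      exact mul_le_mul_of_nonneg_left this ht0.le
    have h3 : ‖y - yk‖ ≤ δ * C := by rw [norm_sub_rev]; exact hdiff
    linarith
  -- assemble
  rw [Real.dist_0_eq_abs, abs_of_nonneg Metric.hausdorffDist_nonneg]
  have hmain : Metric.hausdorffDist
      (closure ((affineSpan ℝ (Set.range (v k)) : Set (EuclideanSpace ℝ (Fin n))) ∩ Ω))
      (closure ((affineSpan ℝ (Set.range vl) : Set (EuclideanSpace ℝ (Fin n))) ∩ Ω))
      ≤ ε / 2 := by
    apply Metric.hausdorffDist_le_of_mem_dist (by positivity)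
    · intro z hz
      obtain ⟨x, hxA, hxz⟩ := Metric.mem_closure_iff.1 hz ε' hε'0
      obtain ⟨y, hyB, hxy⟩ := hdir1 x hxA
      refine ⟨y, subset_closure hyB, ?_⟩
      have := dist_triangle z x y
      linarith
    · intro z hz
      obtain ⟨x, hxB, hxz⟩ := Metric.mem_closure_iff.1 hz ε' hε'0
      obtain ⟨y, hyA, hxy⟩ := hdir2 x hxB
      refine ⟨y, subset_closure hyA, ?_⟩
      have := dist_triangle z x y
      linarith
  linarith

/-- If `V_n → V` in the Grassmannian (encoded by affinely independent
frames `v_n → v` in the chart), and the slice `[V] ∩ Ω` is nonempty, then the closures of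
the slices `[V_n] ∩ Ω` converge to the closure of `[V] ∩ Ω` in the Hausdorff distance
induced by the ambient (Riemannian) metric. -/
theorem stmt_11 {n p : ℕ} (Ω : Set (EuclideanSpace ℝ (Fin n))) (hΩ : IsProperlyConvex Ω)
    (v : ℕ → Fin p → EuclideanSpace ℝ (Fin n)) (vl : Fin p → EuclideanSpace ℝ (Fin n))
    (hvi : ∀ k, AffineIndependent ℝ (v k)) (hvl : AffineIndependent ℝ vl)
    (hconv : ∀ j, Tendsto (fun k => v k j) atTop (𝓝 (vl j)))
    (hmeet : ((affineSpan ℝ (Set.range vl) : Set (EuclideanSpace ℝ (Fin n))) ∩ Ω).Nonempty) :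
    Tendsto (fun k => Metric.hausdorffDist
        (closure ((affineSpan ℝ (Set.range (v k)) : Set (EuclideanSpace ℝ (Fin n))) ∩ Ω))
        (closure ((affineSpan ℝ (Set.range vl) : Set (EuclideanSpace ℝ (Fin n))) ∩ Ω)))
      atTop (𝓝 0) := by
  obtain ⟨h1, h2, h3, -⟩ := hΩ
  exact stmt_11' Ω h1 h2 h3 v vl hvl hconv hmeet
end

section
/- Let Ω ⊂ P(ℝ^d) be a properly convex domain. The collection of properly embedded simplices in Ω is closed in the local Hausdorff topology induced by the Hilbert metric H_Ω: if S_n are properly embedded simplices converging locally Hausdorff to a closed set S ⊂ Ω, then S is a properly embedded simplex. -/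
open Set Filter Topology

lemma sum_smul_mem_closure_simplexOf {E : Type*} [NormedAddCommGroup E] [NormedSpace ℝ E]
    {p : ℕ} (hp : 0 < p) (v : Fin p → E) (t : Fin p → ℝ) (ht : ∀ i, 0 ≤ t i)
    (hs : ∑ i, t i = 1) : (∑ i, t i • v i) ∈ closure (simplexOf v) := by
  set x := ∑ i, t i • v i with hx
  set c := ∑ i : Fin p, ((p : ℝ)⁻¹) • v i with hc
  have hseq : ∀ m : ℕ, x + (1 / (m + 1) : ℝ) • (c - x) ∈ simplexOf v := by
    intro m
    set θ : ℝ := 1 / (m + 1) with hθ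
    have hθ0 : 0 < θ := by positivity
    have hθ1 : θ ≤ 1 := by
      rw [hθ, div_le_one (by positivity)]
      norm_num
    refine ⟨fun i => (1 - θ) * t i + θ * (p : ℝ)⁻¹, fun i => ?_, ?_, ?_⟩
    · have h1 : 0 ≤ (1 - θ) * t i := mul_nonneg (by linarith) (ht i)
      have h2 : 0 < θ * (p : ℝ)⁻¹ := by positivity
      linarith
    · rw [Finset.sum_add_distrib, ← Finset.mul_sum, ← Finset.mul_sum, hs]
      simp only [Finset.sum_const, Finset.card_univ, Fintype.card_fin, nsmul_eq_mul]
      field_simp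
      ring
    · have : ∑ i, ((1 - θ) * t i + θ * (p : ℝ)⁻¹) • v i
          = (1 - θ) • x + θ • c := by
        rw [hx, hc, Finset.smul_sum, Finset.smul_sum, ← Finset.sum_add_distrib]
        refine Finset.sum_congr rfl fun i _ => ?_
        rw [add_smul, smul_smul, smul_smul]
      rw [this]
      module
  have htend : Tendsto (fun m : ℕ => x + (1 / (m + 1) : ℝ) • (c - x)) atTop (𝓝 x) := by
    have h0 : Tendsto (fun m : ℕ => (1 / (m + 1) : ℝ) • (c - x)) atTop (𝓝 ((0 : ℝ) • (c - x))) :=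
      tendsto_one_div_add_atTop_nhds_zero_nat.smul_const (c - x)
    simpa using tendsto_const_nhds.add h0
  exact mem_closure_of_tendsto htend (Eventually.of_forall hseq)

lemma simplexOf_comp_equiv {E : Type*} [AddCommGroup E] [Module ℝ E] {p q : ℕ}
    (σ : Fin q ≃ Fin p) (v : Fin p → E) : simplexOf (v ∘ σ) = simplexOf v := by
  have key : ∀ {a b : ℕ} (τ : Fin a ≃ Fin b) (u : Fin b → E),
      simplexOf (u ∘ τ) ⊆ simplexOf u := by
    intro a b τ u x hx
    obtain ⟨t, htpos, htsum, hteq⟩ := hx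
    refine ⟨t ∘ τ.symm, fun i => htpos _, ?_, ?_⟩
    · rw [← htsum]
      exact Fintype.sum_equiv τ.symm _ _ fun i => rfl
    · rw [hteq]
      refine Fintype.sum_equiv τ _ _ fun i => ?_
      simp
  refine le_antisymm (key σ v) ?_
  have := key σ.symm (v ∘ σ)
  have h2 : (v ∘ σ) ∘ σ.symm = v := by
    ext i; simp
  rwa [h2] at this

set_option maxHeartbeats 1000000 in
/-- The collection of properly embedded simplices in `Ω` is closed in the
local Hausdorff topology induced by the Hilbert metric: if properly embedded simplices `S_k`
converge (in the Kuratowski sense, which on closed subsets of `Ω` agrees with local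
Hausdorff convergence) to a nonempty set `T` closed in `Ω`, then `T` is a properly
embedded simplex. -/
theorem stmt_12 {n : ℕ} (Ω : Set (EuclideanSpace ℝ (Fin n))) (hΩ : IsProperlyConvex Ω)
    (S : ℕ → Set (EuclideanSpace ℝ (Fin n))) (hS : ∀ k, IsPES Ω (S k))
    (T : Set (EuclideanSpace ℝ (Fin n))) (hTne : T.Nonempty) (hTsub : T ⊆ Ω)
    (hTcl : closure T ∩ Ω = T)
    (hlower : ∀ x ∈ T, ∃ s : ℕ → EuclideanSpace ℝ (Fin n),
      (∀ k, s k ∈ S k) ∧ Tendsto s atTop (𝓝 x))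
    (hupper : ∀ (φ : ℕ → ℕ), StrictMono φ → ∀ s : ℕ → EuclideanSpace ℝ (Fin n),
      (∀ k, s k ∈ S (φ k)) → ∀ x ∈ Ω, Tendsto s atTop (𝓝 x) → x ∈ T) :
    IsPES Ω T := by
  classical
  obtain ⟨hΩo, hΩconv, hΩb, hΩne⟩ := hΩ
  choose pk vk hind heq hsub hcl using hS
  -- cardinality bound
  have hple : ∀ k, pk k ≤ n + 1 := by
    intro k
    have h1 := (hind k).card_le_finrank_succ
    have h2 : Module.finrank ℝ (vectorSpan ℝ (Set.range (vk k)))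
        ≤ Module.finrank ℝ (EuclideanSpace ℝ (Fin n)) := Submodule.finrank_le _
    rw [finrank_euclideanSpace_fin] at h2
    simpa using h1.trans (by omega)
  -- constant p along a subsequence
  let F : ℕ → Fin (n + 2) := fun k => ⟨pk k, by have := hple k; omega⟩
  obtain ⟨y, hy⟩ := Finite.exists_infinite_fiber F
  haveI := hy
  let e0 : ℕ ↪o ℕ := Nat.orderEmbeddingOfSet (F ⁻¹' {y})
  have hrange : Set.range e0 = F ⁻¹' {y} := Nat.orderEmbeddingOfSet_range _
  have he0 : StrictMono e0 := e0.strictMono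
  set p := (y : ℕ) with hpdef
  have hpe : ∀ j, pk (e0 j) = p := by
    intro j
    have : e0 j ∈ F ⁻¹' {y} := by rw [← hrange]; exact Set.mem_range_self j
    have hF : F (e0 j) = y := this
    exact congrArg Fin.val hF
  let u0 : ℕ → Fin p → EuclideanSpace ℝ (Fin n) :=
    fun j i => vk (e0 j) (Fin.cast (hpe j).symm i)
  have hu0S : ∀ j, S (e0 j) = simplexOf (u0 j) := by
    intro j
    rw [heq (e0 j)]
    have : u0 j = vk (e0 j) ∘ ⇑(finCongr (hpe j).symm) := rfl
    rw [this, simplexOf_comp_equiv]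
  have hu0ind : ∀ j, AffineIndependent ℝ (u0 j) :=
    fun j => (hind (e0 j)).comp_embedding (finCongr (hpe j).symm).toEmbedding
  -- vertices in closure Ω
  have hu0cl : ∀ j i, u0 j i ∈ closure Ω := by
    intro j i
    have h1 : u0 j i ∈ closure (simplexOf (u0 j)) := by
      have := sum_smul_mem_closure_simplexOf i.pos (u0 j)
        (fun i' => if i' = i then 1 else 0) (fun i' => by positivity)
        (by simp)
      simpa [ite_smul] using this
    rw [← hu0S j] at h1
    exact closure_mono (hsub (e0 j)) h1
  -- extract convergent vertices
  have hcpt : IsCompact (Set.univ.pi fun _ : Fin p => closure Ω) :=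
    isCompact_univ_pi fun _ => hΩb.isCompact_closure
  obtain ⟨w, hwmem, ψ, hψ, hconv⟩ := hcpt.tendsto_subseq
    (x := u0) (fun j => Set.mem_univ_pi.mpr fun i => hu0cl j i)
  set e : ℕ → ℕ := fun j => e0 (ψ j) with hedef
  have he : StrictMono e := he0.comp hψ
  set u : ℕ → Fin p → EuclideanSpace ℝ (Fin n) := fun j => u0 (ψ j) with hudef
  have huS : ∀ j, S (e j) = simplexOf (u j) := fun j => hu0S (ψ j)
  have huind : ∀ j, AffineIndependent ℝ (u j) := fun j => hu0ind (ψ j)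
  have hwt : ∀ i, Tendsto (fun j => u j i) atTop (𝓝 (w i)) := by
    intro i
    exact (tendsto_pi_nhds.mp hconv) i
  clear hconv hwmem
  -- difference of combinations tends to zero
  have hdiff : ∀ t : ℕ → Fin p → ℝ, (∀ j i, 0 ≤ t j i) → (∀ j, ∑ i, t j i = 1) →
      Tendsto (fun j => (∑ i, t j i • u j i) - (∑ i, t j i • w i)) atTop (𝓝 0) := by
    intro t htnn htsum
    have hbd : ∀ j, ‖(∑ i, t j i • u j i) - (∑ i, t j i • w i)‖
        ≤ ∑ i, ‖u j i - w i‖ := by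
      intro j
      have h1 : (∑ i, t j i • u j i) - (∑ i, t j i • w i)
          = ∑ i, t j i • (u j i - w i) := by
        rw [← Finset.sum_sub_distrib]
        exact Finset.sum_congr rfl fun i _ => (smul_sub _ _ _).symm
      rw [h1]
      refine (norm_sum_le _ _).trans (Finset.sum_le_sum fun i _ => ?_)
      rw [norm_smul, Real.norm_eq_abs, abs_of_nonneg (htnn j i)]
      have ht1 : t j i ≤ 1 := by
        rw [← htsum j]
        exact Finset.single_le_sum (fun i' _ => htnn j i') (Finset.mem_univ i)
      nlinarith [norm_nonneg (u j i - w i)]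
    have hzero : Tendsto (fun j => ∑ i, ‖u j i - w i‖) atTop (𝓝 0) := by
      have : Tendsto (fun j => ∑ i : Fin p, ‖u j i - w i‖) atTop (𝓝 (∑ i : Fin p, (0:ℝ))) := by
        refine tendsto_finset_sum _ fun i _ => ?_
        exact tendsto_iff_norm_sub_tendsto_zero.mp (hwt i)
      simpa using this
    rw [tendsto_zero_iff_norm_tendsto_zero]
    exact squeeze_zero (fun j => norm_nonneg _) hbd hzero
  have hwlim : ∀ t : Fin p → ℝ, (∀ i, 0 ≤ t i) → (∑ i, t i = 1) →
      Tendsto (fun j => ∑ i, t i • u j i) atTop (𝓝 (∑ i, t i • w i)) := by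
    intro t htnn htsum
    have h0 := hdiff (fun _ => t) (fun _ => htnn) (fun _ => htsum)
    have := h0.add_const (∑ i, t i • w i)
    simpa using this
  -- the limit "simplex" hull
  set C : Set (EuclideanSpace ℝ (Fin n)) :=
    (fun t : Fin p → ℝ => ∑ i, t i • w i) '' (stdSimplex ℝ (Fin p)) with hCdef
  have hCc : IsCompact C := by
    refine (isCompact_stdSimplex _ _).image ?_
    exact continuous_finset_sum _ fun i _ => (continuous_apply i).smul continuous_const
  have hTC : T ⊆ C := by
    intro x hx
    obtain ⟨s, hsmem, hst⟩ := hlower x hx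
    have hse : Tendsto (fun j => s (e j)) atTop (𝓝 x) := hst.comp he.tendsto_atTop
    have hmem' : ∀ j, ∃ t : Fin p → ℝ, (∀ i, 0 < t i) ∧ ∑ i, t i = 1 ∧
        s (e j) = ∑ i, t i • u j i := by
      intro j
      have := hsmem (e j)
      rw [huS j] at this
      exact this
    choose c hcpos hcsum hceq using hmem'
    have hlimC : Tendsto (fun j => ∑ i, c j i • w i) atTop (𝓝 x) := by
      have h0 := hdiff c (fun j i => (hcpos j i).le) hcsum
      have : (fun j => ∑ i, c j i • w i)
          = fun j => s (e j) - ((∑ i, c j i • u j i) - (∑ i, c j i • w i)) := by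
        funext j; rw [← hceq j]; abel
      rw [this]
      simpa using hse.sub h0
    refine hCc.isClosed.mem_of_tendsto hlimC (Eventually.of_forall fun j => ?_)
    exact ⟨c j, ⟨fun i => (hcpos j i).le, hcsum j⟩, rfl⟩
  -- key properness lemma
  have hKey : ∀ x ∈ Ω, ∀ t : Fin p → ℝ, (∀ i, 0 ≤ t i) → (∑ i, t i = 1) →
      x = ∑ i, t i • w i → ∀ j₀, t j₀ = 0 → False := by
    intro x hxΩ t htnn htsum hxeq j₀ hj₀
    have hxs : Tendsto (fun j => ∑ i, t i • u j i) atTop (𝓝 x) := by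
      rw [hxeq]; exact hwlim t htnn htsum
    obtain ⟨j, hj⟩ := (hxs.eventually (hΩo.eventually_mem hxΩ)).exists
    have hcls : (∑ i, t i • u j i) ∈ closure (S (e j)) := by
      rw [huS j]
      exact sum_smul_mem_closure_simplexOf j₀.pos (u j) t htnn htsum
    have hmem : (∑ i, t i • u j i) ∈ S (e j) := by
      rw [← hcl (e j)]; exact ⟨hcls, hj⟩
    rw [huS j] at hmem
    obtain ⟨c, hcpos, hcsum, hceq⟩ := hmem
    have hct : c = t := by
      refine (affineIndependent_iff_eq_of_fintype_affineCombination_eq ℝ (u j)).mp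
        (huind j) c t hcsum htsum ?_
      rw [Finset.affineCombination_eq_linear_combination _ _ _ hcsum,
        Finset.affineCombination_eq_linear_combination _ _ _ htsum]
      exact hceq.symm
    rw [hct] at hcpos
    exact absurd hj₀ (hcpos j₀).ne'
  -- base point and its positive coefficients
  obtain ⟨x₀, hx₀T⟩ := hTne
  obtain ⟨τ, ⟨hτnn, hτsum⟩, hτeq⟩ := hTC hx₀T
  replace hτeq : (∑ i, τ i • w i) = x₀ := hτeq
  have hp : 0 < p := by
    rcases isEmpty_or_nonempty (Fin p) with hemp | hne
    · exfalso
      rw [Finset.univ_eq_empty, Finset.sum_empty] at hτsum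
      exact one_ne_zero hτsum.symm
    · exact Fin.pos_iff_nonempty.mpr hne
  have hτpos : ∀ i, 0 < τ i := fun i =>
    lt_of_le_of_ne (hτnn i) fun h => hKey x₀ (hTsub hx₀T) τ hτnn hτsum hτeq.symm i h.symm
  -- affine independence of the limit vertices
  have hwind : AffineIndependent ℝ w := by
    by_contra hni
    rw [affineIndependent_iff_of_fintype] at hni
    push_neg at hni
    obtain ⟨lam, hsum0, hvsub, i₀, hne⟩ := hni
    have hlin : ∑ i, lam i • w i = 0 := by
      rw [← Finset.weightedVSub_eq_linear_combination _ hsum0]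
      exact hvsub
    have hneg : ∃ j, lam j < 0 := by
      by_contra hno
      push_neg at hno
      have : ∀ i ∈ Finset.univ, lam i = 0 :=
        (Finset.sum_eq_zero_iff_of_nonneg fun i _ => hno i).mp hsum0
      exact hne (this i₀ (Finset.mem_univ _))
    obtain ⟨j₁, hj₁⟩ := hneg
    obtain ⟨jm, hjmF, hmin⟩ := Finset.exists_min_image
      (Finset.univ.filter fun j => lam j < 0) (fun j => τ j / (-lam j))
      ⟨j₁, Finset.mem_filter.mpr ⟨Finset.mem_univ _, hj₁⟩⟩
    have hlamjm : lam jm < 0 := (Finset.mem_filter.mp hjmF).2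
    set ts : ℝ := τ jm / (-lam jm) with hts
    have htspos : 0 < ts := div_pos (hτpos jm) (by linarith)
    set μ : Fin p → ℝ := fun i => τ i + ts * lam i with hμ
    have hμnn : ∀ i, 0 ≤ μ i := by
      intro i
      rcases lt_or_ge (lam i) 0 with hi | hi
      · have h1 : ts ≤ τ i / (-lam i) :=
          hmin i (Finset.mem_filter.mpr ⟨Finset.mem_univ _, hi⟩)
        rw [le_div_iff₀ (by linarith)] at h1
        simp only [hμ]; nlinarith
      · have := mul_nonneg htspos.le hi
        have := (hτpos i).le
        simp only [hμ]; linarith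
    have hμsum : ∑ i, μ i = 1 := by
      simp only [hμ]
      rw [Finset.sum_add_distrib, ← Finset.mul_sum, hsum0, hτsum]; ring
    have hμeq : (∑ i, μ i • w i) = x₀ := by
      simp only [hμ]
      have : ∀ i, (τ i + ts * lam i) • w i = τ i • w i + ts • (lam i • w i) := by
        intro i; rw [add_smul, smul_smul]
      rw [Finset.sum_congr rfl fun i _ => this i, Finset.sum_add_distrib,
        ← Finset.smul_sum, hlin, smul_zero, add_zero, hτeq]
    have hμjm : μ jm = 0 := by
      have hne0 : lam jm ≠ 0 := ne_of_lt hlamjm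
      have h1 : τ jm * lam jm / -lam jm = -τ jm := by
        rw [div_eq_iff (neg_ne_zero.mpr hne0)]; ring
      simp only [hμ, hts]
      rw [div_mul_eq_mul_div, h1]
      ring
    exact hKey x₀ (hTsub hx₀T) μ hμnn hμsum hμeq.symm jm hμjm
  -- T ⊆ simplexOf w
  have hT1 : T ⊆ simplexOf w := by
    intro x hx
    obtain ⟨t, ⟨htnn, htsum⟩, hteq⟩ := hTC hx
    replace hteq : (∑ i, t i • w i) = x := hteq
    refine ⟨t, fun i => ?_, htsum, hteq.symm⟩
    exact lt_of_le_of_ne (htnn i) fun h =>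
      hKey x (hTsub hx) t htnn htsum hteq.symm i h.symm
  -- simplexOf w ⊆ T
  have hτle1 : ∀ i, τ i ≤ 1 := by
    intro i
    rw [← hτsum]
    exact Finset.single_le_sum (fun i' _ => hτnn i') (Finset.mem_univ i)
  have hT2 : simplexOf w ⊆ T := by
    intro y hy
    obtain ⟨β, hβpos, hβsum, hβeq⟩ := hy
    haveI : Nonempty (Fin p) := Fin.pos_iff_nonempty.mp hp
    obtain ⟨i₁, -, hi₁min⟩ := Finset.exists_min_image Finset.univ β Finset.univ_nonempty
    set δ : ℝ := β i₁ with hδdef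
    have hδpos : 0 < δ := hβpos i₁
    have hδle : ∀ i, δ ≤ β i := fun i => hi₁min i (Finset.mem_univ i)
    set γ : Fin p → ℝ := fun i => (1 + δ) * β i - δ * τ i with hγ
    have hγpos : ∀ i, 0 < γ i := by
      intro i
      have h1 : δ * τ i ≤ δ := by nlinarith [hτle1 i, hτnn i]
      have h2 : 0 < δ * β i := mul_pos hδpos (hβpos i)
      simp only [hγ]; nlinarith [hδle i]
    have hγsum : ∑ i, γ i = 1 := by
      simp only [hγ]
      rw [Finset.sum_sub_distrib, ← Finset.mul_sum, ← Finset.mul_sum, hβsum, hτsum]; ring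
    -- z lies in closure Ω
    set z := ∑ i, γ i • w i with hzdef
    have hzcl : z ∈ closure Ω := by
      refine mem_closure_of_tendsto (hwlim γ (fun i => (hγpos i).le) hγsum)
        (Eventually.of_forall fun j => ?_)
      refine hsub (e j) ?_
      rw [huS j]
      exact ⟨γ, hγpos, hγsum, rfl⟩
    -- y is on the open segment from x₀ to z
    have hz : z = (1 + δ) • y - δ • x₀ := by
      rw [hzdef, hβeq, ← hτeq]
      simp only [hγ]
      rw [Finset.smul_sum, Finset.smul_sum, ← Finset.sum_sub_distrib]
      refine Finset.sum_congr rfl fun i _ => ?_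
      rw [sub_smul, smul_smul, smul_smul]
    have h1δ : (0:ℝ) < 1 + δ := by linarith
    have hyz : (δ / (1 + δ)) • x₀ + (1 / (1 + δ)) • z = y := by
      rw [hz, smul_sub, smul_smul, smul_smul,
        one_div_mul_cancel (ne_of_gt h1δ),
        show (1 / (1 + δ)) * δ = δ / (1 + δ) by ring, one_smul]
      abel
    have hyseg : y ∈ openSegment ℝ x₀ z :=
      ⟨δ / (1 + δ), 1 / (1 + δ), by positivity, by positivity,
        by rw [← add_div, div_eq_one_iff_eq (ne_of_gt h1δ)]; ring, hyz⟩
    have hyΩ : y ∈ Ω := by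
      have hx₀int : x₀ ∈ interior Ω := by rw [hΩo.interior_eq]; exact hTsub hx₀T
      have := hΩconv.openSegment_interior_closure_subset_interior hx₀int hzcl hyseg
      rwa [hΩo.interior_eq] at this
    refine hupper e he (fun j => ∑ i, β i • u j i) (fun j => ?_) y hyΩ ?_
    · rw [huS j]; exact ⟨β, hβpos, hβsum, rfl⟩
    · rw [hβeq]; exact hwlim β (fun i => (hβpos i).le) hβsum
  exact ⟨p, w, hwind, Set.Subset.antisymm hT1 hT2, hTsub, hTcl⟩
end

section
/- Let (X,d) be a complete geodesic metric space, G a geodesic path system on X, c > 0, and θ: [0,T] → X a (1,c)-quasi-geodesic from x = θ(0) to y = θ(T). Suppose there exists δ ≥ 0 such that every triangle with all three vertices on θ and all edges in G is δ-thin. Then for any geodesic γ_{x,y} ∈ G joining x and y, the Hausdorff distance satisfies d^Haus(θ, γ_{x,y}) ≤ 4δ + 10c. -/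
open Set Metric

/-- `A` is (the image of) a geodesic segment from `a` to `b`. -/
def IsGeodesicSeg {X : Type*} [MetricSpace X] (A : Set X) (a b : X) : Prop :=
  ∃ γ : ℝ → X, γ 0 = a ∧ γ (dist a b) = b ∧
    (∀ s ∈ Set.Icc (0 : ℝ) (dist a b), ∀ t ∈ Set.Icc (0 : ℝ) (dist a b),
      dist (γ s) (γ t) = |s - t|) ∧
    A = γ '' Set.Icc (0 : ℝ) (dist a b)

/-- The triangle with sides `A`, `B`, `C` is `δ`-thin: each side is contained in the
`δ`-neighborhood of the union of the other two. -/
def ThinTriangle {X : Type*} [MetricSpace X] (δ : ℝ) (A B C : Set X) : Prop :=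
  (∀ p ∈ A, ∃ q ∈ B ∪ C, dist p q ≤ δ) ∧
  (∀ p ∈ B, ∃ q ∈ C ∪ A, dist p q ≤ δ) ∧
  (∀ p ∈ C, ∃ q ∈ A ∪ B, dist p q ≤ δ)

lemma habs_le {u v : ℝ} (h : u ≤ v) : |u - v| = v - u := by
  rw [abs_of_nonpos (by linarith)]; ring

lemma geod_left_mem {X : Type*} [MetricSpace X] {A : Set X} {a b : X}
    (h : IsGeodesicSeg A a b) : a ∈ A := by
  obtain ⟨γ, h0, hD, hiso, hA⟩ := h
  rw [hA]
  exact ⟨0, ⟨le_refl _, dist_nonneg⟩, h0⟩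

lemma geod_right_mem {X : Type*} [MetricSpace X] {A : Set X} {a b : X}
    (h : IsGeodesicSeg A a b) : b ∈ A := by
  obtain ⟨γ, h0, hD, hiso, hA⟩ := h
  rw [hA]
  exact ⟨dist a b, ⟨dist_nonneg, le_refl _⟩, hD⟩

lemma geod_add {X : Type*} [MetricSpace X] {A : Set X} {a b : X}
    (h : IsGeodesicSeg A a b) {q : X} (hq : q ∈ A) :
    dist a q + dist q b = dist a b := by
  obtain ⟨γ, h0, hD, hiso, hA⟩ := h
  rw [hA] at hq
  obtain ⟨r, hr, rfl⟩ := hq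
  have h0m : (0:ℝ) ∈ Icc (0:ℝ) (dist a b) := ⟨le_refl _, dist_nonneg⟩
  have hDm : dist a b ∈ Icc (0:ℝ) (dist a b) := ⟨dist_nonneg, le_refl _⟩
  have h1 : dist a (γ r) = r := by
    rw [← h0, hiso 0 h0m r hr, habs_le hr.1]; ring
  have h2 : dist (γ r) b = dist a b - r := by
    have h3 := hiso r hr (dist a b) hDm
    rw [hD] at h3
    rw [h3, habs_le hr.2]
  rw [h1, h2]; ring

lemma geod_compact {X : Type*} [MetricSpace X] {A : Set X} {a b : X}
    (h : IsGeodesicSeg A a b) : IsCompact A := by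
  obtain ⟨γ, h0, hD, hiso, hA⟩ := h
  rw [hA]
  apply isCompact_Icc.image_of_continuousOn
  have : LipschitzOnWith 1 γ (Icc (0:ℝ) (dist a b)) := by
    apply LipschitzOnWith.of_dist_le_mul
    intro u hu v hv
    rw [hiso u hu v hv, Real.dist_eq, NNReal.coe_one, one_mul]
  exact this.continuousOn

/-- Let `X` be a complete geodesic metric space with a geodesic path
system (encoded by a choice `g a b` of a geodesic from `a` to `b` for every pair), `c > 0`,
and `θ : [0,T] → X` a `(1,c)`-quasi-geodesic from `x = θ 0` to `y = θ T`.  If there is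
`δ ≥ 0` such that every triangle with vertices on `θ` and edges in the path system is
`δ`-thin, then `d^Haus(θ, γ_{x,y}) ≤ 4δ + 10c`. -/
theorem stmt_14 {X : Type*} [MetricSpace X] [CompleteSpace X]
    (g : X → X → Set X) (hg : ∀ a b : X, IsGeodesicSeg (g a b) a b)
    (c : ℝ) (hc : 0 < c) (T : ℝ) (hT : 0 ≤ T) (θ : ℝ → X)
    (hθ : ∀ s ∈ Set.Icc (0 : ℝ) T, ∀ t ∈ Set.Icc (0 : ℝ) T,
      |s - t| - c ≤ dist (θ s) (θ t) ∧ dist (θ s) (θ t) ≤ |s - t| + c)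
    (δ : ℝ) (hδ : 0 ≤ δ)
    (hthin : ∀ a ∈ θ '' Set.Icc (0 : ℝ) T, ∀ b ∈ θ '' Set.Icc (0 : ℝ) T,
      ∀ e ∈ θ '' Set.Icc (0 : ℝ) T, ThinTriangle δ (g a b) (g b e) (g e a)) :
    Metric.hausdorffDist (θ '' Set.Icc (0 : ℝ) T) (g (θ 0) (θ T)) ≤ 4 * δ + 10 * c := by
  have h0T : (0:ℝ) ∈ Icc (0:ℝ) T := ⟨le_refl _, hT⟩
  have hTT : T ∈ Icc (0:ℝ) T := ⟨hT, le_refl _⟩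
  have hxmem : θ 0 ∈ θ '' Icc (0:ℝ) T := ⟨0, h0T, rfl⟩
  have hymem : θ T ∈ θ '' Icc (0:ℝ) T := ⟨T, hTT, rfl⟩
  have hDlow : T - c ≤ dist (θ 0) (θ T) := by
    have h := (hθ 0 h0T T hTT).1
    rw [habs_le hT] at h
    linarith
  -- degenerate triangle: every point of g (θ T) (θ 0) is δ-close to g (θ 0) (θ T)
  have hdeg : ∀ v ∈ g (θ T) (θ 0), ∃ q ∈ g (θ 0) (θ T), dist v q ≤ δ := by
    intro v hv
    obtain ⟨q, hq, hdq⟩ := (hthin (θ 0) hxmem (θ 0) hxmem (θ T) hymem).2.2 v hv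
    rcases hq with hq | hq
    · -- q ∈ g (θ 0) (θ 0), hence q = θ 0
      have h2 : dist (θ 0) q + dist q (θ 0) = 0 := by
        rw [geod_add (hg _ _) hq, dist_self]
      have h3 : q = θ 0 := by
        have n1 := dist_nonneg (x := θ 0) (y := q)
        have n2 := dist_nonneg (x := q) (y := θ 0)
        have : dist q (θ 0) = 0 := by linarith
        exact dist_eq_zero.mp this
      exact ⟨θ 0, geod_left_mem (hg _ _), h3 ▸ hdq⟩
    · exact ⟨q, hq, hdq⟩
  -- Direction A : every point of θ is close to the geodesic
  have dirA : ∀ p ∈ θ '' Icc (0:ℝ) T, ∃ q ∈ g (θ 0) (θ T), dist p q ≤ 4 * δ + 10 * c := by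
    rintro p ⟨t, ht, rfl⟩
    have qg1 : dist (θ 0) (θ t) ≤ t + c := by
      have h := (hθ 0 h0T t ht).2
      rw [habs_le ht.1] at h; linarith
    have qg2 : dist (θ t) (θ T) ≤ T - t + c := by
      have h := (hθ t ht T hTT).2
      rw [habs_le ht.2] at h; linarith
    obtain ⟨γ₁, hγ0, hγD, hiso, hA⟩ := hg (θ 0) (θ t)
    set D₁ := dist (θ 0) (θ t) with hD₁
    set B := g (θ t) (θ T) with hB
    set C := g (θ T) (θ 0) with hC
    have hBne : B.Nonempty := ⟨_, geod_left_mem (hg _ _)⟩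
    have hBcp : IsCompact B := geod_compact (hg _ _)
    have hCne : C.Nonempty := ⟨_, geod_left_mem (hg _ _)⟩
    have hCcp : IsCompact C := geod_compact (hg _ _)
    have hγcont : ContinuousOn γ₁ (Icc (0:ℝ) D₁) := by
      have : LipschitzOnWith 1 γ₁ (Icc (0:ℝ) D₁) := by
        apply LipschitzOnWith.of_dist_le_mul
        intro u hu v hv
        rw [hiso u hu v hv, Real.dist_eq, NNReal.coe_one, one_mul]
      exact this.continuousOn
    set F : ℝ → ℝ := fun u => infDist (γ₁ u) B - infDist (γ₁ u) C with hF
    have hFcont : ContinuousOn F (Icc (0:ℝ) D₁) :=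
      ((continuous_infDist_pt B).sub (continuous_infDist_pt C)).comp_continuousOn hγcont
    have hF0 : 0 ≤ F 0 := by
      show (0:ℝ) ≤ infDist (γ₁ 0) B - infDist (γ₁ 0) C
      have hCmem : infDist (γ₁ 0) C = 0 := by
        rw [hγ0]; exact infDist_zero_of_mem (geod_right_mem (hg (θ T) (θ 0)))
      rw [hCmem]
      have := infDist_nonneg (s := B) (x := γ₁ 0)
      linarith
    have hFD : F D₁ ≤ 0 := by
      show infDist (γ₁ D₁) B - infDist (γ₁ D₁) C ≤ 0
      have hBmem : infDist (γ₁ D₁) B = 0 := by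
        rw [hγD]; exact infDist_zero_of_mem (geod_left_mem (hg (θ t) (θ T)))
      rw [hBmem]
      have := infDist_nonneg (s := C) (x := γ₁ D₁)
      linarith
    obtain ⟨u, hu, hFu⟩ :=
      intermediate_value_Icc' (a := (0:ℝ)) (b := D₁) dist_nonneg hFcont ⟨hFD, hF0⟩
    change infDist (γ₁ u) B - infDist (γ₁ u) C = 0 at hFu
    set p := γ₁ u with hp
    have hpA : p ∈ g (θ 0) (θ t) := by rw [hA]; exact ⟨u, hu, rfl⟩
    obtain ⟨q0, hq0, hdq0⟩ := (hthin (θ 0) hxmem (θ t) ⟨t, ht, rfl⟩ (θ T) hymem).1 p hpA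
    have hboth : infDist p B ≤ δ ∧ infDist p C ≤ δ := by
      rcases hq0 with h | h
      · have h1 : infDist p B ≤ δ := le_trans (infDist_le_dist_of_mem h) hdq0
        exact ⟨h1, by linarith⟩
      · have h1 : infDist p C ≤ δ := le_trans (infDist_le_dist_of_mem h) hdq0
        exact ⟨by linarith, h1⟩
    obtain ⟨w, hwB, hwd⟩ := hBcp.exists_infDist_eq_dist hBne p
    obtain ⟨v, hvC, hvd⟩ := hCcp.exists_infDist_eq_dist hCne p
    have hw : dist p w ≤ δ := by rw [← hwd]; exact hboth.1
    have hv : dist p v ≤ δ := by rw [← hvd]; exact hboth.2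
    have hxp : dist (θ 0) p = u - 0 := by
      have h1 := hiso 0 ⟨le_refl _, dist_nonneg⟩ u hu
      rw [hγ0, habs_le hu.1] at h1
      exact h1
    have hpt : dist p (θ t) = D₁ - u := by
      have h2 := hiso u hu D₁ ⟨dist_nonneg, le_refl _⟩
      rw [hγD, habs_le hu.2] at h2
      exact h2
    have hwadd : dist (θ t) w + dist w (θ T) = dist (θ t) (θ T) := geod_add (hg _ _) hwB
    have h5 : dist (θ 0) (θ T) ≤ dist (θ 0) p + dist p w + dist w (θ T) :=
      dist_triangle4 _ _ _ _
    have h6 : dist (θ t) p ≤ dist (θ t) w + dist w p := dist_triangle _ _ _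
    have hc1 : dist (θ t) p = dist p (θ t) := dist_comm _ _
    have hc2 : dist w p = dist p w := dist_comm _ _
    have key : dist p (θ t) ≤ δ + 3 * c / 2 := by
      linarith
    obtain ⟨q, hqxy, hqd⟩ := hdeg v hvC
    refine ⟨q, hqxy, ?_⟩
    have htri : dist (θ t) q ≤ dist (θ t) p + dist p v + dist v q := dist_triangle4 _ _ _ _
    linarith
  -- Direction B : every point of the geodesic is close to θ
  have dirB : ∀ p ∈ g (θ 0) (θ T), ∃ q ∈ θ '' Icc (0:ℝ) T, dist p q ≤ 4 * δ + 10 * c := by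
    intro p hp
    obtain ⟨γ₀, hγ0, hγD, hiso, hA⟩ := hg (θ 0) (θ T)
    rw [hA] at hp
    obtain ⟨s, hs, rfl⟩ := hp
    set D := dist (θ 0) (θ T) with hD
    have hxp : dist (θ 0) (γ₀ s) = s - 0 := by
      have h1 := hiso 0 ⟨le_refl _, dist_nonneg⟩ s hs
      rw [hγ0, habs_le hs.1] at h1
      exact h1
    have hpy : dist (γ₀ s) (θ T) = D - s := by
      have h2 := hiso s hs D ⟨dist_nonneg, le_refl _⟩
      rw [hγD, habs_le hs.2] at h2
      exact h2
    set S := {t : ℝ | t ∈ Icc (0:ℝ) T ∧ dist (θ 0) (θ t) ≤ s} with hSdef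
    have h0S : (0:ℝ) ∈ S := ⟨h0T, by rw [dist_self]; exact hs.1⟩
    have hbdd : BddAbove S := ⟨T, fun t htS => htS.1.2⟩
    set t₀ := sSup S with ht₀def
    have ht₀mem : t₀ ∈ Icc (0:ℝ) T :=
      ⟨le_csSup hbdd h0S, csSup_le ⟨0, h0S⟩ (fun t htS => htS.1.2)⟩
    have hupper : dist (θ 0) (θ t₀) ≤ s + c := by
      apply le_of_forall_pos_le_add
      intro ε hε
      obtain ⟨t, htS, htgt⟩ := exists_lt_of_lt_csSup ⟨0, h0S⟩
        (show t₀ - ε < sSup S from by rw [← ht₀def]; linarith)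
      have htle : t ≤ t₀ := le_csSup hbdd htS
      have hq := (hθ t htS.1 t₀ ht₀mem).2
      rw [habs_le htle] at hq
      have htri := dist_triangle (θ 0) (θ t) (θ t₀)
      linarith [htS.2]
    have hlower : s ≤ dist (θ 0) (θ t₀) + c := by
      rcases eq_or_lt_of_le ht₀mem.2 with heq | hlt
      · rw [heq]
        linarith [hs.2]
      · apply le_of_forall_pos_le_add
        intro ε hε
        set t := min (t₀ + ε) T with htdef
        have ht1 : t₀ < t := lt_min (by linarith) hlt
        have ht2 : t ∈ Icc (0:ℝ) T := ⟨le_trans ht₀mem.1 ht1.le, min_le_right _ _⟩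
        have htnS : t ∉ S := fun h => absurd (le_csSup hbdd h) (not_le.mpr ht1)
        have hgt : s < dist (θ 0) (θ t) := by
          by_contra h
          push_neg at h
          exact htnS ⟨ht2, h⟩
        have hq := (hθ t₀ ht₀mem t ht2).2
        rw [habs_le ht1.le] at hq
        have htri := dist_triangle (θ 0) (θ t₀) (θ t)
        have htb : t - t₀ ≤ ε := by
          have := min_le_left (t₀ + ε) T
          rw [← htdef] at this
          linarith
        linarith
    have qgt₀lo : t₀ - c ≤ dist (θ 0) (θ t₀) := by
      have h := (hθ 0 h0T t₀ ht₀mem).1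
      rw [habs_le ht₀mem.1] at h; linarith
    have qgt₀hi : dist (θ 0) (θ t₀) ≤ t₀ + c := by
      have h := (hθ 0 h0T t₀ ht₀mem).2
      rw [habs_le ht₀mem.1] at h; linarith
    have qgy : dist (θ t₀) (θ T) ≤ T - t₀ + c := by
      have h := (hθ t₀ ht₀mem T hTT).2
      rw [habs_le ht₀mem.2] at h; linarith
    have hpmem : γ₀ s ∈ g (θ 0) (θ T) := by rw [hA]; exact ⟨s, hs, rfl⟩
    obtain ⟨q, hq, hdq⟩ :=
      (hthin (θ 0) hxmem (θ T) hymem (θ t₀) ⟨t₀, ht₀mem, rfl⟩).1 (γ₀ s) hpmem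
    refine ⟨θ t₀, ⟨t₀, ht₀mem, rfl⟩, ?_⟩
    rcases hq with hq | hq
    · -- q ∈ g (θ T) (θ t₀)
      have hadd : dist (θ T) q + dist q (θ t₀) = dist (θ T) (θ t₀) := geod_add (hg _ _) hq
      have hcm : dist (θ T) (θ t₀) = dist (θ t₀) (θ T) := dist_comm _ _
      have htri1 : dist (γ₀ s) (θ T) ≤ dist (γ₀ s) q + dist q (θ T) := dist_triangle _ _ _
      have hcm2 : dist q (θ T) = dist (θ T) q := dist_comm _ _
      have htri2 : dist (γ₀ s) (θ t₀) ≤ dist (γ₀ s) q + dist q (θ t₀) := dist_triangle _ _ _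
      linarith
    · -- q ∈ g (θ t₀) (θ 0)
      have hadd : dist (θ t₀) q + dist q (θ 0) = dist (θ t₀) (θ 0) := geod_add (hg _ _) hq
      have hcm : dist (θ t₀) (θ 0) = dist (θ 0) (θ t₀) := dist_comm _ _
      have htri1 : dist (θ 0) (γ₀ s) ≤ dist (θ 0) q + dist q (γ₀ s) := dist_triangle _ _ _
      have hcm2 : dist (θ 0) q = dist q (θ 0) := dist_comm _ _
      have hcm3 : dist q (γ₀ s) = dist (γ₀ s) q := dist_comm _ _
      have htri2 : dist (γ₀ s) (θ t₀) ≤ dist (γ₀ s) q + dist q (θ t₀) := dist_triangle _ _ _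
      have hcm4 : dist q (θ t₀) = dist (θ t₀) q := dist_comm _ _
      linarith
  exact Metric.hausdorffDist_le_of_mem_dist (by linarith) dirA dirB
end

section
/- Let X be a metric space, (X,d) complete geodesic, with a collection S of subsets and an almost-projection system Π = {π_S}_{S∈S} with constant C. Suppose r ≥ 2C, x₁,x₂ ∈ X, S ∈ S, and ξ is a geodesic connecting x₁ and x₂. Then diam(ξ ∩ N_X(S;r)) ≤ d(π_S(x₁), π_S(x₂)) + 18r + 62C. -/
open Set

/-- Let `(X,d)` be a complete geodesic metric space with a collection of
subsets `S i` and an almost-projection system `π i : X → S i` with constant `C` (properties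
`h1`, `h2`, `h3` below).  If `r ≥ 2C`, `x₁, x₂ ∈ X` and `ξ` is a geodesic joining `x₁`
and `x₂`, then `diam(ξ ∩ N_X(S i; r)) ≤ d(π_S(x₁), π_S(x₂)) + 18r + 62C`. -/
theorem stmt_15 {X : Type*} [MetricSpace X] [CompleteSpace X]
    (hgeo : ∀ x y : X, ∃ A : Set X, IsGeodesicSeg A x y)
    {ι : Type*} (S : ι → Set X) (hSne : ∀ i, (S i).Nonempty)
    (π : ι → X → X) (C : ℝ) (hC : 0 < C)
    (hmem : ∀ i x, π i x ∈ S i)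
    (h1 : ∀ i (x : X), ∀ p ∈ S i, dist x p ≥ dist x (π i x) + dist (π i x) p - C)
    (h2 : ∀ i j, S i ≠ S j → Metric.diam (π i '' S j) ≤ C)
    (h3 : ∀ i (x : X), Metric.diam (π i '' Metric.ball x (Metric.infDist x (S i))) ≤ C)
    (i : ι) (r : ℝ) (hr : 2 * C ≤ r) (x₁ x₂ : X) (ξ : Set X)
    (hξ : IsGeodesicSeg ξ x₁ x₂) :
    Metric.diam (ξ ∩ {y : X | Metric.infDist y (S i) < r}) ≤
      dist (π i x₁) (π i x₂) + 18 * r + 62 * C := by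
  obtain ⟨γ, hγ0, hγL, hiso, hξeq⟩ := hξ
  have hCnn : (0:ℝ) ≤ C := hC.le
  have hr0 : (0:ℝ) ≤ r := le_trans (by linarith) hr
  -- If `w` is within `r` of `S i`, then `dist w (π i w) ≤ r + C`.
  have near : ∀ w : X, Metric.infDist w (S i) < r → dist w (π i w) ≤ r + C := by
    intro w hw
    obtain ⟨p, hp, hdp⟩ := (Metric.infDist_lt_iff (hSne i)).mp hw
    have h1w := h1 i w p hp
    have h0 : (0:ℝ) ≤ dist (π i w) p := dist_nonneg
    linarith
  -- Endpoint projection bound.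
  have endpt : ∀ a w : X, Metric.infDist w (S i) < r →
      dist a (π i a) ≤ dist a w + r + 2 * C := by
    intro a w hw
    have h1a := h1 i a (π i w) (hmem i w)
    have htri := dist_triangle a w (π i w)
    have hnw := near w hw
    have h0 : (0:ℝ) ≤ dist (π i a) (π i w) := dist_nonneg
    linarith
  have key : ∀ s ∈ Set.Icc (0:ℝ) (dist x₁ x₂), ∀ t ∈ Set.Icc (0:ℝ) (dist x₁ x₂),
      s ≤ t → Metric.infDist (γ s) (S i) < r → Metric.infDist (γ t) (S i) < r →
      dist (γ s) (γ t) ≤ dist (π i x₁) (π i x₂) + 18 * r + 62 * C := by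
    intro s hs t ht hst hns hnt
    have h0mem : (0:ℝ) ∈ Set.Icc (0:ℝ) (dist x₁ x₂) := ⟨le_refl _, dist_nonneg⟩
    have hLmem : dist x₁ x₂ ∈ Set.Icc (0:ℝ) (dist x₁ x₂) := ⟨dist_nonneg, le_refl _⟩
    have hds : dist x₁ (γ s) = s := by
      have := hiso 0 h0mem s hs
      rw [hγ0] at this
      rw [this, abs_of_nonpos (by linarith [hs.1])]
      ring
    have hdt : dist x₂ (γ t) = dist x₁ x₂ - t := by
      have := hiso (dist x₁ x₂) hLmem t ht
      rw [hγL] at this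
      rw [this, abs_of_nonneg (by linarith [ht.2])]
    have hdst : dist (γ s) (γ t) = t - s := by
      rw [hiso s hs t ht, abs_of_nonpos (by linarith)]; ring
    have hA : dist x₁ (π i x₁) ≤ s + r + 2 * C := by
      have := endpt x₁ (γ s) hns; rw [hds] at this; exact this
    have hB : dist x₂ (π i x₂) ≤ (dist x₁ x₂ - t) + r + 2 * C := by
      have := endpt x₂ (γ t) hnt; rw [hdt] at this; exact this
    have htri : dist x₁ x₂ ≤ dist x₁ (π i x₁) + dist (π i x₁) (π i x₂) + dist (π i x₂) x₂ :=
      dist_triangle4 x₁ (π i x₁) (π i x₂) x₂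
    have hcm : dist (π i x₂) x₂ = dist x₂ (π i x₂) := dist_comm _ _
    linarith
  apply Metric.diam_le_of_forall_dist_le
  · have h0 : (0:ℝ) ≤ dist (π i x₁) (π i x₂) := dist_nonneg
    linarith
  · rintro y ⟨hyξ, hyn⟩ z ⟨hzξ, hzn⟩
    rw [hξeq] at hyξ hzξ
    obtain ⟨s, hs, rfl⟩ := hyξ
    obtain ⟨t, ht, rfl⟩ := hzξ
    rcases le_total s t with h | h
    · exact key s hs t ht h hyn hzn
    · rw [dist_comm]
      exact key t ht s hs h hzn hyn
end
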